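/- Let m ≥ 1, let M, N ⊆ [m] with M ⊊ [m] and ∅ ≠ N ⊊ [m], and let D = aΔ_M^c + cΔ_N^c ⊆ E^m. Then the linear right-E-code C^R_D has length |D| = (2^m−2^{|M|})(2^m−2^{|N|}) and size 2^m, and the multiset {wt_Lee(c^R_D(v)) : v ∈ E^m} (with multiplicity over all 2^{2m} elements v ∈ E^m) consists of: (2^m−2^{|M|})(2^m−2^{|N|−1}) with multiplicity 2^m(2^{m−|N|}−2^{m−|M∪N|}); 2^m(2^m−2^{|M|})−2^{m+|N|−1} with multiplicity 2^m(2^{m−|M∪N|}−1); (2^m−2^{|M|})(2^m−2^{|N|}) with multiplicity 2^m(2^m−2^{m−|N|}); and 0 with multiplicity 2^m. -/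

import Mathlib

open Finset

/-- The simplicial complex `Δ_M ⊆ 𝔽₂^m` generated by `M ⊆ [m]`:
all vectors whose support is contained in `M`. -/
def deltaC {m : ℕ} (M : Finset (Fin m)) : Finset (Fin m → ZMod 2) :=
  Finset.univ.filter (fun w => ∀ i, w i ≠ 0 → i ∈ M)

/-- Dot product over `𝔽₂`. -/
def dotp {m : ℕ} (x y : Fin m → ZMod 2) : ZMod 2 := ∑ i, x i * y i

/-- The Gray map on a single element `a·s + c·t ↔ (s, t)` of `E = 𝔽₂ × 𝔽₂`:
`Φ(as + ct) = (t, s + t)`. -/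
def grayPair (e : ZMod 2 × ZMod 2) : Fin 2 → ZMod 2 := ![e.2, e.1 + e.2]

/-- The left codeword `c^L_D(v)` for `v = aα + cβ ↔ (α, β)`:
its coordinate at `d = (t₁, t₂) ∈ D` is `a(α·t₁) + c(β·t₁) ↔ (α·t₁, β·t₁)`. -/
def cwL {m : ℕ} (Ds : Finset ((Fin m → ZMod 2) × (Fin m → ZMod 2)))
    (v : (Fin m → ZMod 2) × (Fin m → ZMod 2)) :
    {d // d ∈ Ds} → ZMod 2 × ZMod 2 :=
  fun d => (dotp v.1 d.1.1, dotp v.2 d.1.1)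

/-- The Gray image `Φ(c^L_D(v)) ∈ 𝔽₂^{2|D|}` of the left codeword `c^L_D(v)`;
its Hamming weight (`hammingNorm`) is the Lee weight of `c^L_D(v)`. -/
def gcwL {m : ℕ} (Ds : Finset ((Fin m → ZMod 2) × (Fin m → ZMod 2)))
    (v : (Fin m → ZMod 2) × (Fin m → ZMod 2)) :
    {d // d ∈ Ds} × Fin 2 → ZMod 2 :=
  fun x => grayPair (cwL Ds v x.1) x.2

/-- The right codeword `c^R_D(v)` for `v = aα + cβ ↔ (α, β)`:
its coordinate at `d = (t₁, t₂) ∈ D` is `a(t₁·α) + c(t₂·α) ↔ (t₁·α, t₂·α)`. -/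
def cwR {m : ℕ} (Ds : Finset ((Fin m → ZMod 2) × (Fin m → ZMod 2)))
    (v : (Fin m → ZMod 2) × (Fin m → ZMod 2)) :
    {d // d ∈ Ds} → ZMod 2 × ZMod 2 :=
  fun d => (dotp d.1.1 v.1, dotp d.1.2 v.1)

/-- The Gray image `Φ(c^R_D(v)) ∈ 𝔽₂^{2|D|}` of the right codeword `c^R_D(v)`;
its Hamming weight (`hammingNorm`) is the Lee weight of `c^R_D(v)`. -/
def gcwR {m : ℕ} (Ds : Finset ((Fin m → ZMod 2) × (Fin m → ZMod 2)))
    (v : (Fin m → ZMod 2) × (Fin m → ZMod 2)) :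
    {d // d ∈ Ds} × Fin 2 → ZMod 2 :=
  fun x => grayPair (cwR Ds v x.1) x.2

/-!
Write `v = aα + cβ`. The coordinate of `c^R_D(v)` at `(t₁, t₂)` has Gray image
`(t₂·α, t₁·α + t₂·α)`, so the Lee weight depends on `α` only and equals
`|D₁|·o₂ + z₁·o₂ + o₁·z₂`, where `oᵢ` and `zᵢ` count the `t ∈ Dᵢ` with `t·α ≠ 0` and `t·α = 0`.
For `D = Δ_S^c` there are two cases. If `αᵢ = 1` for some `i ∈ S`, translation by `eᵢ`
preserves `Δ_S^c` and swaps the two level sets of `t ↦ t·α`, so `o = z`. If `α ≠ 0` vanishes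
on `S`, then `t·α = 0` on all of `Δ_S`, so `o = 2^(m-1)`. This yields the four weight classes
`α ∉ Δ_{Nᶜ}`, `α ∈ Δ_{Nᶜ} ∖ Δ_{(M∪N)ᶜ}`, `α ∈ Δ_{(M∪N)ᶜ} ∖ {0}` and `α = 0`, each carrying
`2^m` choices of `β`; their sizes follow from `|Δ_S| = 2^|S|`.
-/

lemma dotp_eq_dotProduct {m : ℕ} (x y : Fin m → ZMod 2) : dotp x y = x ⬝ᵥ y := rfl

lemma dotp_add_left {m : ℕ} (x y z : Fin m → ZMod 2) : dotp (x + y) z = dotp x z + dotp y z :=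
  add_dotProduct x y z

lemma dotp_single_left {m : ℕ} (i : Fin m) (z : Fin m → ZMod 2) :
    dotp (Pi.single i 1) z = z i := by
  rw [dotp_eq_dotProduct, single_dotProduct, one_mul]

lemma zmod_two_ne_iff (x y : ZMod 2) : x ≠ y ↔ (x = 0 ∧ y ≠ 0) ∨ (x ≠ 0 ∧ y = 0) := by
  revert x y; decide

lemma hammingNorm_grayPair (s t : ZMod 2) :
    hammingNorm (grayPair (s, t)) = (if t ≠ 0 then 1 else 0) + (if s ≠ t then 1 else 0) := by
  revert s t; decide

lemma hammingNorm_gcwR {m : ℕ} (Ds : Finset ((Fin m → ZMod 2) × (Fin m → ZMod 2)))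
    (v : (Fin m → ZMod 2) × (Fin m → ZMod 2)) :
    hammingNorm (gcwR Ds v) =
      #{d ∈ Ds | dotp d.2 v.1 ≠ 0} + #{d ∈ Ds | dotp d.1 v.1 ≠ dotp d.2 v.1} := by
  have hcoord : ∀ d : Ds, (∑ j, if gcwR Ds v (d, j) ≠ 0 then 1 else 0) =
      (if dotp d.1.2 v.1 ≠ 0 then 1 else 0) +
        (if dotp d.1.1 v.1 ≠ dotp d.1.2 v.1 then 1 else 0) := by
    intro d
    rw [← hammingNorm_grayPair, hammingNorm, card_filter]
    rfl
  rw [hammingNorm, card_filter, Fintype.sum_prod_type, Fintype.sum_congr _ _ hcoord,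
    sum_add_distrib, sum_coe_sort Ds (fun d => if dotp d.2 v.1 ≠ 0 then 1 else 0),
    sum_coe_sort Ds (fun d => if dotp d.1 v.1 ≠ dotp d.2 v.1 then 1 else 0),
    card_filter, card_filter]

lemma card_filter_product_ne {α β : Type*} (s : Finset α) (t : Finset β)
    (f : α → ZMod 2) (g : β → ZMod 2) :
    #{x ∈ s ×ˢ t | f x.1 ≠ g x.2} =
      #{a ∈ s | f a = 0} * #{b ∈ t | g b ≠ 0} + #{a ∈ s | f a ≠ 0} * #{b ∈ t | g b = 0} := by
  classical
  have hsplit : {x ∈ s ×ˢ t | f x.1 ≠ g x.2} =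
      {a ∈ s | f a = 0} ×ˢ {b ∈ t | g b ≠ 0} ∪ {a ∈ s | f a ≠ 0} ×ˢ {b ∈ t | g b = 0} := by
    ext ⟨a, b⟩
    simp only [mem_filter, mem_product, mem_union]
    rw [zmod_two_ne_iff]
    tauto
  rw [hsplit, card_union_of_disjoint, card_product, card_product]
  exact disjoint_product.mpr (Or.inl (disjoint_filter.mpr fun _ _ h h' => h' h))

lemma hammingNorm_gcwR_product {m : ℕ} (D₁ D₂ : Finset (Fin m → ZMod 2))
    (v : (Fin m → ZMod 2) × (Fin m → ZMod 2)) :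
    hammingNorm (gcwR (D₁ ×ˢ D₂) v) =
      #D₁ * #{t ∈ D₂ | dotp t v.1 ≠ 0} +
        (#{t ∈ D₁ | dotp t v.1 = 0} * #{t ∈ D₂ | dotp t v.1 ≠ 0} +
          #{t ∈ D₁ | dotp t v.1 ≠ 0} * #{t ∈ D₂ | dotp t v.1 = 0}) := by
  rw [hammingNorm_gcwR, filter_product_right (fun t => dotp t v.1 ≠ 0), card_product,
    card_filter_product_ne _ _ (dotp · v.1) (dotp · v.1)]

lemma hammingNorm_gcwR_of_fst_eq_zero {m : ℕ}
    (Ds : Finset ((Fin m → ZMod 2) × (Fin m → ZMod 2)))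
    {v : (Fin m → ZMod 2) × (Fin m → ZMod 2)} (hv : v.1 = 0) : hammingNorm (gcwR Ds v) = 0 := by
  simp [hammingNorm_gcwR, hv, dotp_eq_dotProduct]

section Counting

variable {m : ℕ} {S : Finset (Fin m)} {α : Fin m → ZMod 2}

lemma mem_deltaC {w : Fin m → ZMod 2} : w ∈ deltaC S ↔ ∀ i, w i ≠ 0 → i ∈ S := by
  simp [deltaC]

lemma zero_mem_deltaC (S : Finset (Fin m)) : (0 : Fin m → ZMod 2) ∈ deltaC S := by
  simp [mem_deltaC]

lemma deltaC_inter (S T : Finset (Fin m)) : deltaC (S ∩ T) = deltaC S ∩ deltaC T := by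
  ext w
  simp only [mem_deltaC, mem_inter]
  exact ⟨fun h => ⟨fun i hi => (h i hi).1, fun i hi => (h i hi).2⟩,
    fun h i hi => ⟨h.1 i hi, h.2 i hi⟩⟩

lemma card_deltaC (S : Finset (Fin m)) : #(deltaC S) = 2 ^ #S := by
  classical
  have : deltaC S = Fintype.piFinset fun i => if i ∈ S then univ else {0} := by
    ext w
    simp only [mem_deltaC, Fintype.mem_piFinset]
    refine forall_congr' fun i => ?_
    split_ifs <;> simp [*]
  rw [this, Fintype.card_piFinset]
  simp [apply_ite, prod_ite_mem]

lemma card_compl_deltaC_add (S : Finset (Fin m)) : #(deltaC S)ᶜ + 2 ^ #S = 2 ^ m := by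
  rw [← card_deltaC, card_compl_add_card]
  simp

lemma card_compl_deltaC (S : Finset (Fin m)) : #(deltaC S)ᶜ = 2 ^ m - 2 ^ #S := by
  have := card_compl_deltaC_add S
  omega

lemma compl_deltaC_nonempty (hS : S ≠ univ) : (deltaC S)ᶜ.Nonempty := by
  obtain ⟨j, hj⟩ : ∃ j, j ∉ S := by
    by_contra! h
    exact hS (eq_univ_iff_forall.mpr h)
  refine ⟨Pi.single j 1, mem_compl.mpr fun h => hj (mem_deltaC.mp h j ?_)⟩
  simp

lemma dotp_eq_zero_of_mem_deltaC {t : Fin m → ZMod 2} (ht : t ∈ deltaC S)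
    (hα : α ∈ deltaC Sᶜ) : dotp t α = 0 := by
  refine sum_eq_zero fun i _ => ?_
  by_cases hti : t i = 0
  · simp [hti]
  · by_contra h
    exact mem_compl.mp (mem_deltaC.mp hα i (right_ne_zero_of_mul h)) (mem_deltaC.mp ht i hti)

lemma card_filter_dotp_eq_zero_eq_of_add_mem_iff (A : Finset (Fin m → ZMod 2))
    {u : Fin m → ZMod 2} (hu : dotp u α ≠ 0) (hA : ∀ t, t + u ∈ A ↔ t ∈ A) :
    #{t ∈ A | dotp t α = 0} = #{t ∈ A | dotp t α ≠ 0} := by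
  refine card_equiv (Equiv.addRight u) fun t => ?_
  have h01 : ∀ x y : ZMod 2, y ≠ 0 → (x = 0 ↔ x + y ≠ 0) := by decide
  rw [mem_filter, mem_filter, Equiv.coe_addRight, hA, dotp_add_left, ← h01 _ _ hu]

lemma add_single_mem_deltaC_iff {i : Fin m} (hi : i ∈ S) (t : Fin m → ZMod 2) :
    t + Pi.single i 1 ∈ deltaC S ↔ t ∈ deltaC S := by
  simp only [mem_deltaC]
  refine forall_congr' fun j => ?_
  by_cases hj : j = i
  · simp [hj, hi]
  · simp [hj]

lemma card_filter_dotp_compl_deltaC_of_notMem (hα : α ∉ deltaC Sᶜ) :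
    #{t ∈ (deltaC S)ᶜ | dotp t α = 0} = #{t ∈ (deltaC S)ᶜ | dotp t α ≠ 0} := by
  obtain ⟨i, hi, hαi⟩ : ∃ i ∈ S, α i ≠ 0 := by
    simpa [mem_deltaC, and_comm] using hα
  refine card_filter_dotp_eq_zero_eq_of_add_mem_iff _ (u := Pi.single i 1)
    (by rwa [dotp_single_left]) fun t => ?_
  simp only [mem_compl, add_single_mem_deltaC_iff hi]

lemma two_mul_card_filter_dotp_ne_zero (hα : α ≠ 0) :
    2 * #{t | dotp t α ≠ 0} = 2 ^ m := by
  obtain ⟨i, hi⟩ := Function.ne_iff.mp hα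
  have hzo := card_filter_dotp_eq_zero_eq_of_add_mem_iff univ (u := Pi.single i 1)
    (by rwa [dotp_single_left]) fun t => by simp only [mem_univ]
  have hsum := card_filter_add_card_filter_not (s := univ) fun t => dotp t α = 0
  simp only [card_univ, Fintype.card_fun, ZMod.card, Fintype.card_fin, ne_eq] at hsum hzo ⊢
  omega

lemma filter_dotp_ne_zero_compl_deltaC (hα : α ∈ deltaC Sᶜ) :
    {t ∈ (deltaC S)ᶜ | dotp t α ≠ 0} = ({t | dotp t α ≠ 0} : Finset _) := by
  ext t
  simp only [mem_filter, mem_compl, mem_univ, true_and]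
  exact ⟨And.right, fun h => ⟨fun ht => h (dotp_eq_zero_of_mem_deltaC ht hα), h⟩⟩

lemma exists_mem_compl_deltaC_dotp_ne_zero (hS : S ≠ univ) (hα : α ≠ 0) :
    ∃ t ∈ (deltaC S)ᶜ, dotp t α ≠ 0 := by
  simp only [← filter_nonempty_iff, ← card_pos]
  by_cases hαS : α ∈ deltaC Sᶜ
  · have := two_mul_card_filter_dotp_ne_zero hα
    rw [filter_dotp_ne_zero_compl_deltaC hαS]
    have := Nat.two_pow_pos m
    omega
  · have hzo := card_filter_dotp_compl_deltaC_of_notMem hαS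
    have hsum := card_filter_add_card_filter_not (s := (deltaC S)ᶜ) fun t => dotp t α ≠ 0
    have := (compl_deltaC_nonempty hS).card_pos
    simp only [not_not] at hsum
    omega

end Counting

lemma map_val_product_univ_eq_replicate_add {ι κ β : Type*} [DecidableEq ι] [Fintype κ]
    [DecidableEq κ] {A B : Finset ι} (hAB : A ⊆ B) (f : ι × κ → β) {b : β}
    (hf : ∀ x : ι × κ, x.1 ∈ B → x.1 ∉ A → f x = b) :
    (B ×ˢ univ).val.map f = Multiset.replicate (Fintype.card κ * (#B - #A)) b +
      (A ×ˢ (univ : Finset κ)).val.map f := by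
  have hsub : A ×ˢ (univ : Finset κ) ⊆ B ×ˢ univ := product_subset_product_left hAB
  rw [← tsub_add_cancel_of_le (val_le_iff.mpr hsub), Multiset.map_add, ← sdiff_val]
  congr 1
  refine Multiset.eq_replicate.mpr ⟨?_, fun y hy => ?_⟩
  · rw [Multiset.card_map, card_val, card_sdiff_of_subset hsub, card_product, card_product,
      card_univ, ← Nat.sub_mul, mul_comm]
  · obtain ⟨x, hx, rfl⟩ := Multiset.mem_map.mp hy
    simp only [mem_val, mem_sdiff, mem_product, mem_univ, and_true] at hx
    exact hf x hx.1 hx.2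

section RightCode

variable {m : ℕ} {M N : Finset (Fin m)}

lemma cwR_injective_fst (hM : M ≠ univ) (hN : N ≠ univ) :
    Function.Injective fun α => cwR ((deltaC M)ᶜ ×ˢ (deltaC N)ᶜ) (α, 0) := by
  intro α β h
  by_contra hne
  obtain ⟨t₁, ht₁, hdot⟩ := exists_mem_compl_deltaC_dotp_ne_zero hM (sub_ne_zero.mpr hne)
  obtain ⟨t₂, ht₂⟩ := compl_deltaC_nonempty hN
  have hαβ : dotp t₁ α = dotp t₁ β :=
    congrArg Prod.fst (congrFun h ⟨(t₁, t₂), mem_product.mpr ⟨ht₁, ht₂⟩⟩)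
  rw [dotp_eq_dotProduct, dotProduct_sub, ← dotp_eq_dotProduct, ← dotp_eq_dotProduct, hαβ,
    sub_self] at hdot
  exact hdot rfl

lemma card_image_cwR (hM : M ≠ univ) (hN : N ≠ univ) :
    #(univ.image (cwR ((deltaC M)ᶜ ×ˢ (deltaC N)ᶜ))) = 2 ^ m := by
  have hfst : cwR ((deltaC M)ᶜ ×ˢ (deltaC N)ᶜ) =
      (fun α => cwR ((deltaC M)ᶜ ×ˢ (deltaC N)ᶜ) (α, 0)) ∘ Prod.fst := rfl
  rw [hfst, ← image_image, image_univ_of_surjective Prod.fst_surjective,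
    card_image_of_injective _ (cwR_injective_fst hM hN)]
  simp

variable {v : (Fin m → ZMod 2) × (Fin m → ZMod 2)}

lemma hammingNorm_gcwR_of_notMem_deltaC_compl (hN : v.1 ∉ deltaC Nᶜ) :
    hammingNorm (gcwR ((deltaC M)ᶜ ×ˢ (deltaC N)ᶜ) v) =
      (2 ^ m - 2 ^ #M) * (2 ^ m - 2 ^ #N) := by
  have hzo := card_filter_dotp_compl_deltaC_of_notMem hN
  have h₁ := card_filter_add_card_filter_not (s := (deltaC M)ᶜ) fun t => dotp t v.1 = 0
  have h₂ := card_filter_add_card_filter_not (s := (deltaC N)ᶜ) fun t => dotp t v.1 = 0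
  rw [hzo] at h₂
  rw [hammingNorm_gcwR_product, ← card_compl_deltaC, ← card_compl_deltaC, ← h₁, ← h₂, hzo]
  ring

lemma hammingNorm_gcwR_add_of_mem_deltaC_compl (hN : v.1 ∈ deltaC Nᶜ) (hv : v.1 ≠ 0) :
    hammingNorm (gcwR ((deltaC M)ᶜ ×ˢ (deltaC N)ᶜ) v) +
      #{t ∈ (deltaC M)ᶜ | dotp t v.1 ≠ 0} * 2 ^ #N = 2 ^ m * (2 ^ m - 2 ^ #M) := by
  have ho₂ := two_mul_card_filter_dotp_ne_zero hv
  rw [← filter_dotp_ne_zero_compl_deltaC hN] at ho₂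
  have h₁ := card_filter_add_card_filter_not (s := (deltaC M)ᶜ) fun t => dotp t v.1 = 0
  have h₂ := card_filter_add_card_filter_not (s := (deltaC N)ᶜ) fun t => dotp t v.1 = 0
  have hd₂ := card_compl_deltaC_add N
  have hk : #{t ∈ (deltaC N)ᶜ | dotp t v.1 ≠ 0} =
      #{t ∈ (deltaC N)ᶜ | dotp t v.1 = 0} + 2 ^ #N := by
    simp only [ne_eq] at ho₂ h₂ ⊢
    omega
  rw [hammingNorm_gcwR_product, ← card_compl_deltaC, ← ho₂, ← h₁, hk]
  ring

lemma hammingNorm_gcwR_of_mem_deltaC_compl_of_notMem (hN : v.1 ∈ deltaC Nᶜ)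
    (hMN : v.1 ∉ deltaC (M ∪ N)ᶜ) (hN₀ : N.Nonempty) :
    hammingNorm (gcwR ((deltaC M)ᶜ ×ˢ (deltaC N)ᶜ) v) =
      (2 ^ m - 2 ^ #M) * (2 ^ m - 2 ^ (#N - 1)) := by
  have hM : v.1 ∉ deltaC Mᶜ := fun hM =>
    hMN (by rw [compl_union, deltaC_inter]; exact mem_inter.mpr ⟨hM, hN⟩)
  have hv : v.1 ≠ 0 := fun h => hM (h ▸ zero_mem_deltaC _)
  have key := hammingNorm_gcwR_add_of_mem_deltaC_compl (M := M) hN hv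
  have hzo := card_filter_dotp_compl_deltaC_of_notMem hM
  have h₁ := card_filter_add_card_filter_not (s := (deltaC M)ᶜ) fun t => dotp t v.1 = 0
  have hpow : 2 ^ #N = 2 * 2 ^ (#N - 1) := by
    rw [← pow_succ']
    have := hN₀.card_pos
    congr 1
    omega
  have hhalf : #{t ∈ (deltaC M)ᶜ | dotp t v.1 ≠ 0} * 2 ^ #N =
      (2 ^ m - 2 ^ #M) * 2 ^ (#N - 1) := by
    rw [← card_compl_deltaC, ← h₁, hzo, hpow]
    ring
  rw [hhalf] at key
  rw [Nat.mul_sub, mul_comm]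
  exact Nat.eq_sub_of_add_eq key

lemma hammingNorm_gcwR_of_mem_deltaC_compl_union (hMN : v.1 ∈ deltaC (M ∪ N)ᶜ) (hv : v.1 ≠ 0) :
    hammingNorm (gcwR ((deltaC M)ᶜ ×ˢ (deltaC N)ᶜ) v) =
      2 ^ m * (2 ^ m - 2 ^ #M) - 2 ^ (m + #N - 1) := by
  rw [compl_union, deltaC_inter, mem_inter] at hMN
  have key := hammingNorm_gcwR_add_of_mem_deltaC_compl (M := M) hMN.2 hv
  have ho₁ := two_mul_card_filter_dotp_ne_zero hv
  rw [← filter_dotp_ne_zero_compl_deltaC hMN.1] at ho₁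
  obtain ⟨i, -⟩ := Function.ne_iff.mp hv
  have hm := i.pos
  have hpow : 2 ^ (m + #N - 1) = #{t ∈ (deltaC M)ᶜ | dotp t v.1 ≠ 0} * 2 ^ #N := by
    have h2m : 2 ^ m = 2 * 2 ^ (m - 1) := by
      rw [← pow_succ']
      congr 1
      omega
    rw [show #{t ∈ (deltaC M)ᶜ | dotp t v.1 ≠ 0} = 2 ^ (m - 1) by omega, ← pow_add]
    congr 1
    omega
  rw [hpow]
  exact Nat.eq_sub_of_add_eq key

end RightCode

theorem stmt_13_general {m : ℕ} (M N : Finset (Fin m))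
    (hMu : M ≠ Finset.univ) (hN : N ≠ ∅) (hNu : N ≠ Finset.univ)
    (Ds : Finset ((Fin m → ZMod 2) × (Fin m → ZMod 2)))
    (hDs : Ds = (deltaC M)ᶜ ×ˢ (deltaC N)ᶜ) :
    Ds.card = (2 ^ m - 2 ^ M.card) * (2 ^ m - 2 ^ N.card) ∧
    ((Finset.univ : Finset ((Fin m → ZMod 2) × (Fin m → ZMod 2))).image (cwR Ds)).card = 2 ^ m ∧
    (Finset.univ : Finset ((Fin m → ZMod 2) × (Fin m → ZMod 2))).val.map (fun v => hammingNorm (gcwR Ds v)) =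
      Multiset.replicate (2 ^ m * (2 ^ (m - N.card) - 2 ^ (m - (M ∪ N).card)))
          ((2 ^ m - 2 ^ M.card) * (2 ^ m - 2 ^ (N.card - 1))) +
      Multiset.replicate (2 ^ m * (2 ^ (m - (M ∪ N).card) - 1))
          (2 ^ m * (2 ^ m - 2 ^ M.card) - 2 ^ (m + N.card - 1)) +
      Multiset.replicate (2 ^ m * (2 ^ m - 2 ^ (m - N.card)))
          ((2 ^ m - 2 ^ M.card) * (2 ^ m - 2 ^ N.card)) +
      Multiset.replicate (2 ^ m)
          (0) := by
  subst hDs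
  refine ⟨by rw [card_product, card_compl_deltaC, card_compl_deltaC], card_image_cwR hMu hNu, ?_⟩
  have hUN : deltaC (M ∪ N)ᶜ ⊆ deltaC Nᶜ := by
    rw [compl_union, deltaC_inter]
    exact inter_subset_right
  rw [← univ_product_univ,
    map_val_product_univ_eq_replicate_add (subset_univ _) _
      fun v _ hv => hammingNorm_gcwR_of_notMem_deltaC_compl hv,
    map_val_product_univ_eq_replicate_add hUN _
      fun v hv hv' => hammingNorm_gcwR_of_mem_deltaC_compl_of_notMem hv hv'
        (nonempty_iff_ne_empty.mpr hN),
    map_val_product_univ_eq_replicate_add (singleton_subset_iff.mpr (zero_mem_deltaC _)) _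
      fun v hv hv' => hammingNorm_gcwR_of_mem_deltaC_compl_union hv (notMem_singleton.mp hv'),
    map_val_product_univ_eq_replicate_add (empty_subset _) _
      fun v hv _ => hammingNorm_gcwR_of_fst_eq_zero _ (mem_singleton.mp hv)]
  simp only [card_univ, Fintype.card_fun, ZMod.card, Fintype.card_fin, card_deltaC, card_compl,
    card_singleton, card_empty, empty_product, empty_val, Multiset.map_zero, add_zero,
    Nat.sub_zero, mul_one]
  abel

theorem stmt_13 {m : ℕ} (hm : 1 ≤ m) (M N : Finset (Fin m))
    (hMu : M ≠ Finset.univ) (hN : N ≠ ∅) (hNu : N ≠ Finset.univ)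
    (Ds : Finset ((Fin m → ZMod 2) × (Fin m → ZMod 2)))
    (hDs : Ds = (deltaC M)ᶜ ×ˢ (deltaC N)ᶜ) :
    Ds.card = (2 ^ m - 2 ^ M.card) * (2 ^ m - 2 ^ N.card) ∧
    ((Finset.univ : Finset ((Fin m → ZMod 2) × (Fin m → ZMod 2))).image (cwR Ds)).card = 2 ^ m ∧
    (Finset.univ : Finset ((Fin m → ZMod 2) × (Fin m → ZMod 2))).val.map (fun v => hammingNorm (gcwR Ds v)) =
      Multiset.replicate (2 ^ m * (2 ^ (m - N.card) - 2 ^ (m - (M ∪ N).card)))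
          ((2 ^ m - 2 ^ M.card) * (2 ^ m - 2 ^ (N.card - 1))) +
      Multiset.replicate (2 ^ m * (2 ^ (m - (M ∪ N).card) - 1))
          (2 ^ m * (2 ^ m - 2 ^ M.card) - 2 ^ (m + N.card - 1)) +
      Multiset.replicate (2 ^ m * (2 ^ m - 2 ^ (m - N.card)))
          ((2 ^ m - 2 ^ M.card) * (2 ^ m - 2 ^ N.card)) +
      Multiset.replicate (2 ^ m)
          (0) :=
  stmt_13_general M N hMu hN hNu Ds hDs
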